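/- The transvectant transformation is invariant under the μ-binomial transform applied to both arguments: for all sequences a, c : ℕ → ℚ, all μ ∈ ℚ and all n, if b_m = Σ_{i=0}^{m} C(m,i) μ^{m-i} a_i and d_m = Σ_{i=0}^{m} C(m,i) μ^{m-i} c_i, then Σ_{i=0}^{n} (−1)^i C(n,i) b_i d_{n-i} = Σ_{i=0}^{n} (−1)^i C(n,i) a_i c_{n-i}. -/

import Mathlib

/-!
With exponential generating functions `A(x) = ∑ aₘ xᵐ / m!`, the μ-binomial transform is
multiplication by `e^{μx}`, and the transvectant of `a` and `c` has `A(-x) C(x)` as its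
exponential generating function. Transforming both sequences multiplies `A(-x) C(x)` by
`e^{-μx} e^{μx} = 1`.
-/

open PowerSeries Finset Nat

variable {K : Type*} [Field K]

def binomialTransform (μ : K) (a : ℕ → K) (m : ℕ) : K :=
  ∑ i ∈ range (m + 1), (m.choose i : K) * μ ^ (m - i) * a i

def transvectant (a c : ℕ → K) (n : ℕ) : K :=
  ∑ i ∈ range (n + 1), (-1 : K) ^ i * (n.choose i : K) * a i * c (n - i)

namespace PowerSeries

noncomputable def egf (a : ℕ → K) : K⟦X⟧ :=
  mk fun m => a m / m !

theorem rescale_egf (μ : K) (a : ℕ → K) : rescale μ (egf a) = egf fun m => μ ^ m * a m := by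
  simp only [egf, rescale_mk, mul_div_assoc]

variable [CharZero K]

theorem factorial_mul_coeff_egf (a : ℕ → K) (n : ℕ) : n ! * coeff n (egf a) = a n := by
  rw [egf, coeff_mk, mul_div_cancel₀ _ (by exact_mod_cast n.factorial_ne_zero)]

theorem factorial_mul_coeff_egf_mul_egf (a c : ℕ → K) (n : ℕ) :
    n ! * coeff n (egf a * egf c) =
      ∑ i ∈ range (n + 1), (n.choose i : K) * a i * c (n - i) := by
  rw [coeff_mul, Nat.sum_antidiagonal_eq_sum_range_succ_mk, mul_sum]
  refine sum_congr rfl fun i hi => ?_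
  simp only [egf, coeff_mk, Nat.cast_choose K (Nat.lt_succ_iff.mp (mem_range.mp hi))]
  field_simp

theorem egf_pow (μ : K) : egf (fun m => μ ^ m) = rescale μ (exp K) := by
  ext n
  simp [egf, coeff_rescale, coeff_exp, div_eq_mul_inv]

theorem rescale_neg_exp_mul_rescale_exp (μ : K) :
    rescale (-μ) (exp K) * rescale μ (exp K) = 1 := by
  rw [exp_mul_exp_eq_exp_add, neg_add_cancel, rescale_zero]
  simp

theorem egf_binomialTransform (μ : K) (a : ℕ → K) :
    egf (binomialTransform μ a) = egf a * rescale μ (exp K) := by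
  ext n
  refine mul_left_cancel₀ (by exact_mod_cast n.factorial_ne_zero : (n ! : K) ≠ 0) ?_
  rw [factorial_mul_coeff_egf, ← egf_pow, factorial_mul_coeff_egf_mul_egf, binomialTransform]
  exact sum_congr rfl fun i _ => by ring

theorem transvectant_eq_factorial_mul_coeff (a c : ℕ → K) (n : ℕ) :
    transvectant a c n = n ! * coeff n (rescale (-1) (egf a) * egf c) := by
  rw [rescale_egf, factorial_mul_coeff_egf_mul_egf, transvectant]
  exact sum_congr rfl fun i _ => by ring

end PowerSeries

theorem transvectant_binomialTransform [CharZero K] (μ : K) (a c : ℕ → K) :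
    transvectant (binomialTransform μ a) (binomialTransform μ c) = transvectant a c := by
  ext n
  simp only [transvectant_eq_factorial_mul_coeff, egf_binomialTransform, map_mul,
    rescale_rescale]
  congr 2
  calc rescale (-1) (egf a) * rescale (μ * -1) (exp K) * (egf c * rescale μ (exp K))
      = rescale (-1) (egf a) * egf c * (rescale (-μ) (exp K) * rescale μ (exp K)) := by
        rw [mul_neg_one]; ring
    _ = rescale (-1) (egf a) * egf c := by rw [rescale_neg_exp_mul_rescale_exp, mul_one]

theorem transvectant_binomial_invariant (a c : ℕ → ℚ) (μ : ℚ) (n : ℕ) (b d : ℕ → ℚ)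
    (hb : ∀ m, b m = ∑ i ∈ Finset.range (m + 1), (m.choose i : ℚ) * μ ^ (m - i) * a i)
    (hd : ∀ m, d m = ∑ i ∈ Finset.range (m + 1), (m.choose i : ℚ) * μ ^ (m - i) * c i) :
    ∑ i ∈ Finset.range (n + 1), (-1 : ℚ) ^ i * (n.choose i : ℚ) * b i * d (n - i)
      = ∑ i ∈ Finset.range (n + 1), (-1 : ℚ) ^ i * (n.choose i : ℚ) * a i * c (n - i) := by
  obtain rfl : b = binomialTransform μ a := funext hb
  obtain rfl : d = binomialTransform μ c := funext hd
  exact congrFun (transvectant_binomialTransform μ a c) n
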